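/- Let k ≥ 3 be an integer and let G be a 3-connected graph with maximum degree at most k. Let u and v be non-adjacent vertices of G with a common neighbour. Then the set of proper k-colourings of G in which u and v receive the same colour, if non-empty, forms a single Kempe class. -/

import Mathlib

open SimpleGraph
open scoped Classical

variable {V : Type*}

/-- A proper `k`-colouring of `G`. -/
def IsProperColoring (G : SimpleGraph V) (k : ℕ) (c : V → Fin k) : Prop :=
  ∀ ⦃u v : V⦄, G.Adj u v → c u ≠ c v

/-- `c'` is obtained from `c` by a single Kempe change: the colours `a` and `b` are
swapped on the connected component (of the subgraph induced by the vertices coloured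
`a` or `b`) containing `v0`, and all other vertices keep their colour. -/

def KempeStep (G : SimpleGraph V) (k : ℕ) (c c' : V → Fin k) : Prop :=
  ∃ a b : Fin k, ∃ v0 : {x : V | c x = a ∨ c x = b},
    ∀ v : V, c' v =
      if h : c v = a ∨ c v = b then
        if (G.induce {x : V | c x = a ∨ c x = b}).Reachable v0 ⟨v, h⟩
          then Equiv.swap a b (c v) else c v
      else c v

/-- Two colourings are Kempe equivalent if one is obtained from the other by a finite
sequence of Kempe changes. -/
def KempeEquiv (G : SimpleGraph V) (k : ℕ) (c c' : V → Fin k) : Prop :=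
  Relation.ReflTransGen (KempeStep G k) c c'

/-- The set of all proper `k`-colourings of `G` forms a single Kempe class. -/
def KempeClass (G : SimpleGraph V) (k : ℕ) : Prop :=
  ∀ c c' : V → Fin k, IsProperColoring G k c → IsProperColoring G k c' →
    KempeEquiv G k c c'

/-- `G` is `d`-degenerate: every nonempty set of vertices contains a vertex with at
most `d` neighbours inside the set. -/
def Degenerate (G : SimpleGraph V) (d : ℕ) : Prop :=
  ∀ S : Set V, S.Nonempty → ∃ v ∈ S, (S ∩ G.neighborSet v).ncard ≤ d

/-- `G` is 3-connected: more than 3 vertices, and deleting any at most 2 vertices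
leaves it connected. -/
def ThreeConnected [Fintype V] (G : SimpleGraph V) : Prop :=
  3 < Fintype.card V ∧ ∀ S : Set V, S.ncard ≤ 2 → (G.induce Sᶜ).Connected

/-!
Let `H` be the image of `G` under `Function.update id v u`: `v` is merged into `u` and left
isolated. A colouring of `G` that agrees on `u` and `v` is a colouring of `H` and is unchanged by
precomposition with the merging map, while precomposition pulls a Kempe change of `H` back to a
swap on a union of Kempe chains of `G`, i.e. to a sequence of Kempe changes. So it suffices that
all `k`-colourings of `H` are Kempe equivalent.

Because `G` is 3-connected, every vertex set of `H` avoiding `v` and containing a vertex other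
than `u` has a vertex `p ≠ u` with a `G`-neighbour outside the set, or whose neighbours `u` and
`v` were merged; either way `p` loses a neighbour, so `H` is `(k-1)`-degenerate.

By Las Vergnas–Meyniel, all `k`-colourings of a `(k-1)`-degenerate graph are Kempe equivalent.
Remove the edges at a vertex `v` of degree `< k` and lift each Kempe change of the smaller graph:
first recolour `v` with a colour outside `{a, b}` missing around `v`, if there is one; otherwise
`v` has at most one neighbour coloured `a` or `b`, and `v` simply joins that neighbour's chain.
-/

open Relation

lemma Equiv.swap_apply_eq_or_eq_iff {α : Type*} [DecidableEq α] {a b x : α} :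
    (Equiv.swap a b x = a ∨ Equiv.swap a b x = b) ↔ (x = a ∨ x = b) := by
  rcases eq_or_ne x a with rfl | hxa
  · simp
  rcases eq_or_ne x b with rfl | hxb
  · simp
  rw [Equiv.swap_apply_of_ne_of_ne hxa hxb]

section KempeChains

variable {k : ℕ} {G : SimpleGraph V} {c c' : V → Fin k} {a b : Fin k} {S C : Set V}

/-- The components of `kempeGraph G c a b` containing an `a`- or `b`-coloured vertex are the
`(a, b)`-Kempe chains of `c`. -/
def kempeGraph (G : SimpleGraph V) (c : V → Fin k) (a b : Fin k) : SimpleGraph V where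
  Adj x y := G.Adj x y ∧ (c x = a ∨ c x = b) ∧ (c y = a ∨ c y = b)
  symm := ⟨fun _ _ h => ⟨h.1.symm, h.2.2, h.2.1⟩⟩
  loopless := ⟨fun _ h => h.1.ne rfl⟩

noncomputable def kempeSwap (c : V → Fin k) (a b : Fin k) (S : Set V) : V → Fin k :=
  fun x => if x ∈ S then Equiv.swap a b (c x) else c x

/-- `S` is a union of `(a, b)`-Kempe chains of `c`. -/
def IsKempeClosed (G : SimpleGraph V) (c : V → Fin k) (a b : Fin k) (S : Set V) : Prop :=
  (∀ x ∈ S, c x = a ∨ c x = b) ∧ ∀ ⦃x y⦄, x ∈ S → (kempeGraph G c a b).Adj x y → y ∈ S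

lemma KempeEquiv.trans {c₁ c₂ c₃ : V → Fin k} (h : KempeEquiv G k c₁ c₂)
    (h' : KempeEquiv G k c₂ c₃) : KempeEquiv G k c₁ c₃ :=
  ReflTransGen.trans h h'

lemma kempeSwap_eq_or_eq_iff {x : V} :
    (kempeSwap c a b S x = a ∨ kempeSwap c a b S x = b) ↔ (c x = a ∨ c x = b) := by
  unfold kempeSwap
  split_ifs
  exacts [Equiv.swap_apply_eq_or_eq_iff, Iff.rfl]

@[simp]
lemma kempeGraph_kempeSwap : kempeGraph G (kempeSwap c a b S) a b = kempeGraph G c a b := by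
  ext
  simp only [kempeGraph, kempeSwap_eq_or_eq_iff]

lemma eq_or_eq_of_reachable_kempeGraph {x y : V} (hx : c x = a ∨ c x = b)
    (h : (kempeGraph G c a b).Reachable x y) : c y = a ∨ c y = b := by
  rcases ((reachable_iff_reflTransGen x y).mp h).cases_tail with rfl | ⟨z, -, hzy⟩
  exacts [hx, hzy.2.2]

lemma isKempeClosed_reachable {x : V} (hx : c x = a ∨ c x = b) :
    IsKempeClosed G c a b {y | (kempeGraph G c a b).Reachable x y} :=
  ⟨fun _ => eq_or_eq_of_reachable_kempeGraph hx, fun _ _ hy h => hy.trans h.reachable⟩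

lemma IsKempeClosed.mem_of_reachable (hS : IsKempeClosed G c a b S) {x y : V} (hx : x ∈ S)
    (h : (kempeGraph G c a b).Reachable x y) : y ∈ S := by
  rw [reachable_iff_reflTransGen] at h
  induction h with
  | refl => exact hx
  | tail _ hzy ih => exact hS.2 ih hzy

lemma IsKempeClosed.sdiff (hS : IsKempeClosed G c a b S) (hC : IsKempeClosed G c a b C) :
    IsKempeClosed G (kempeSwap c a b C) a b (S \ C) := by
  rw [IsKempeClosed, kempeGraph_kempeSwap]
  exact ⟨fun x hx => kempeSwap_eq_or_eq_iff.mpr (hS.1 x hx.1),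
    fun x y hx hxy => ⟨hS.2 hx.1 hxy, fun hy => hx.2 (hC.2 hy hxy.symm)⟩⟩

lemma reachable_induce_iff_reachable_kempeGraph {x y : V} (hx : c x = a ∨ c x = b)
    (hy : c y = a ∨ c y = b) :
    (G.induce {z | c z = a ∨ c z = b}).Reachable ⟨x, hx⟩ ⟨y, hy⟩ ↔
      (kempeGraph G c a b).Reachable x y := by
  let φ : G.induce {z | c z = a ∨ c z = b} →g kempeGraph G c a b :=
    ⟨Subtype.val, fun {p q} h => ⟨h, p.2, q.2⟩⟩
  refine ⟨fun h => h.map φ, fun h => ?_⟩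
  rw [reachable_iff_reflTransGen] at h
  induction h with
  | refl => rfl
  | tail _ hzy ih => exact (ih hzy.2.1).trans (Adj.reachable (G := G.induce _) hzy.1)

lemma kempeStep_iff : KempeStep G k c c' ↔ ∃ a b x, (c x = a ∨ c x = b) ∧
    c' = kempeSwap c a b {y | (kempeGraph G c a b).Reachable x y} := by
  have key : ∀ (a b : Fin k) (x : V) (hx : c x = a ∨ c x = b) (y : V),
      (if hy : c y = a ∨ c y = b then
        if (G.induce {z | c z = a ∨ c z = b}).Reachable ⟨x, hx⟩ ⟨y, hy⟩
          then Equiv.swap a b (c y) else c y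
      else c y) = kempeSwap c a b {y | (kempeGraph G c a b).Reachable x y} y := by
    intro a b x hx y
    unfold kempeSwap
    by_cases hy : c y = a ∨ c y = b
    · simp only [dif_pos hy, reachable_induce_iff_reachable_kempeGraph, Set.mem_ofPred_eq]
    · have hyC : y ∉ {y | (kempeGraph G c a b).Reachable x y} :=
        fun h => hy (eq_or_eq_of_reachable_kempeGraph hx h)
      rw [dif_neg hy, if_neg hyC]
  refine exists_congr fun a => exists_congr fun b => ⟨?_, ?_⟩
  · rintro ⟨⟨x, hx⟩, h⟩
    exact ⟨x, hx, funext fun y => (h y).trans (key a b x hx y)⟩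
  · rintro ⟨x, hx, rfl⟩
    exact ⟨⟨x, hx⟩, fun y => (key a b x hx y).symm⟩

lemma IsProperColoring.kempeSwap (hc : IsProperColoring G k c) (hS : IsKempeClosed G c a b S) :
    IsProperColoring G k (kempeSwap c a b S) := by
  have cross : ∀ ⦃x y⦄, G.Adj x y → x ∈ S → y ∉ S → Equiv.swap a b (c x) ≠ c y :=
    fun x y hxy hx hy h =>
      hy (hS.2 hx ⟨hxy, hS.1 x hx, h ▸ Equiv.swap_apply_eq_or_eq_iff.mpr (hS.1 x hx)⟩)
  intro x y hxy
  unfold _root_.kempeSwap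
  split_ifs with hx hy hy
  · exact (Equiv.injective _).ne (hc hxy)
  · exact cross hxy hx hy
  · exact (cross hxy.symm hy hx).symm
  · exact hc hxy

lemma KempeStep.isProperColoring (h : KempeStep G k c c') (hc : IsProperColoring G k c) :
    IsProperColoring G k c' := by
  obtain ⟨a, b, x, hx, rfl⟩ := kempeStep_iff.mp h
  exact hc.kempeSwap (isKempeClosed_reachable hx)

lemma KempeEquiv.isProperColoring (h : KempeEquiv G k c c') (hc : IsProperColoring G k c) :
    IsProperColoring G k c' := by
  unfold KempeEquiv at h
  induction h with
  | refl => exact hc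
  | tail _ hstep ih => exact hstep.isProperColoring ih

lemma kempeSwap_kempeSwap_sdiff (hCS : C ⊆ S) :
    kempeSwap (kempeSwap c a b C) a b (S \ C) = kempeSwap c a b S := by
  funext x
  by_cases hxC : x ∈ C
  · simp [kempeSwap, hxC, hCS hxC]
  · simp [kempeSwap, hxC]

theorem kempeEquiv_kempeSwap [Finite V] (hS : IsKempeClosed G c a b S) :
    KempeEquiv G k c (kempeSwap c a b S) := by
  induction hn : S.ncard using Nat.strong_induction_on generalizing c S with
  | _ n ih =>
  rcases S.eq_empty_or_nonempty with rfl | ⟨x, hx⟩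
  · have : kempeSwap c a b ∅ = c := funext fun _ => if_neg (Set.notMem_empty _)
    rw [this]
    exact ReflTransGen.refl
  set C := {y | (kempeGraph G c a b).Reachable x y}
  have hC : IsKempeClosed G c a b C := isKempeClosed_reachable (hS.1 x hx)
  have hstep : KempeStep G k c (kempeSwap c a b C) := kempeStep_iff.mpr ⟨a, b, x, hS.1 x hx, rfl⟩
  have hlt : (S \ C).ncard < n :=
    hn ▸ Set.ncard_lt_ncard (Set.sdiff_ssubset_left_iff.mpr ⟨x, hx, Reachable.refl x⟩)
  have hCS : C ⊆ S := fun y hy => hS.mem_of_reachable hx hy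
  have hrest := ih _ hlt (hS.sdiff hC) rfl
  rw [kempeSwap_kempeSwap_sdiff hCS] at hrest
  exact ReflTransGen.head hstep hrest

lemma kempeEquiv_update [Finite V] {x : V} {e : Fin k}
    (hx : ∀ y, G.Adj x y → c y ≠ c x ∧ c y ≠ e) : KempeEquiv G k c (Function.update c x e) := by
  have hS : IsKempeClosed G c (c x) e {x} := by
    refine ⟨fun y hy => Or.inl (congrArg c hy), fun y z hy hyz => ?_⟩
    rw [Set.mem_singleton_iff.mp hy] at hyz
    exact (hyz.2.2.elim (hx z hyz.1).1 (hx z hyz.1).2).elim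
  convert kempeEquiv_kempeSwap hS using 1
  funext y
  by_cases hyx : y = x
  · subst hyx
    simp [kempeSwap]
  · simp [kempeSwap, hyx]

lemma kempeGraph_deleteIncidenceSet_adj_iff {v : V} {α γ : V → Fin k}
    (hαγ : ∀ x ≠ v, α x = γ x) {x y : V} (hx : x ≠ v) (hy : y ≠ v) :
    (kempeGraph (G.deleteIncidenceSet v) γ a b).Adj x y ↔ (kempeGraph G α a b).Adj x y := by
  simp only [kempeGraph, deleteIncidenceSet_adj, hαγ x hx, hαγ y hy, ne_eq, hx, hy,
    not_false_eq_true, and_true]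

theorem kempeEquiv_of_isIndepSet [Finite V] (hc : IsProperColoring G k c)
    (hc' : IsProperColoring G k c') (hind : G.IsIndepSet {x | c x ≠ c' x}) :
    KempeEquiv G k c c' := by
  have := Fintype.ofFinite V
  suffices ∀ T : Finset V, KempeEquiv G k c (T.piecewise c' c) by
    simpa using this Finset.univ
  intro T
  induction T using Finset.induction_on with
  | empty =>
    rw [Finset.piecewise_empty]
    exact ReflTransGen.refl
  | insert x T hxT ih =>
    rw [Finset.piecewise_insert]
    refine ih.trans ?_
    have hcx : T.piecewise c' c x = c x := Finset.piecewise_eq_of_notMem _ _ _ hxT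
    by_cases hx : c x = c' x
    · rw [← hx, ← hcx, Function.update_eq_self]
      exact ReflTransGen.refl
    refine kempeEquiv_update fun y hxy => ?_
    have hy : c y = c' y := by_contra fun hy => hind hx hy hxy.ne hxy
    have hcy : T.piecewise c' c y = c y := by
      by_cases hyT : y ∈ T <;> simp [hyT, hy]
    rw [hcy, hcx]
    exact ⟨(hc hxy).symm, hy ▸ (hc' hxy).symm⟩

end KempeChains

section LasVergnasMeyniel

variable {k : ℕ} {G : SimpleGraph V} {c c' α γ δ : V → Fin k} {a b : Fin k} {C : Set V}
  {v : V}

lemma Degenerate.mono_left [Finite V] {H : SimpleGraph V} {d : ℕ} (hle : H ≤ G)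
    (h : Degenerate G d) : Degenerate H d := by
  intro S hS
  obtain ⟨x, hx, hd⟩ := h S hS
  exact ⟨x, hx, (Set.ncard_le_ncard (Set.inter_subset_inter_right S fun _ h => hle h)).trans hd⟩

lemma exists_forall_ne_or_subsingleton [Finite V] (f : V → Fin k) (a b : Fin k) {N : Set V}
    (hN : N.ncard ≤ k - 1) :
    (∃ e, e ≠ a ∧ e ≠ b ∧ ∀ y ∈ N, f y ≠ e) ∨ {y ∈ N | f y = a ∨ f y = b}.Subsingleton := by
  by_contra! ⟨hcover, hP⟩
  set P := {y | f y = a ∨ f y = b}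
  have hcolours : k ≤ (f '' (N \ P)).ncard + 2 := by
    have hsub : (Set.univ : Set (Fin k)) ⊆ f '' (N \ P) ∪ {a, b} := by
      intro e _
      by_cases he : e = a ∨ e = b
      · exact Or.inr he
      push Not at he
      obtain ⟨y, hy, rfl⟩ := hcover e he.1 he.2
      exact Or.inl ⟨y, ⟨hy, fun h => h.elim he.1 he.2⟩, rfl⟩
    calc k = (Set.univ : Set (Fin k)).ncard := by simp
      _ ≤ (f '' (N \ P) ∪ {a, b}).ncard := Set.ncard_le_ncard hsub
      _ ≤ (f '' (N \ P)).ncard + ({a, b} : Set (Fin k)).ncard := Set.ncard_union_le _ _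
      _ ≤ (f '' (N \ P)).ncard + 2 := by
        grw [Set.ncard_insert_le a {b}, Set.ncard_singleton]
  have hsplit := Set.ncard_inter_add_ncard_sdiff_eq_ncard N P
  have htwo : 1 < (N ∩ P).ncard := Set.one_lt_ncard_iff_nontrivial.mpr hP
  have himage : (f '' (N \ P)).ncard ≤ (N \ P).ncard := Set.ncard_image_le
  have hk : 0 < k := a.pos
  omega

lemma exists_kempeEquiv_subsingleton_kempeGraph_adj [Finite V]
    (hv : (G.neighborSet v).ncard ≤ k - 1) (hα : IsProperColoring G k α) (a b : Fin k) :
    ∃ α₁, KempeEquiv G k α α₁ ∧ (∀ x ≠ v, α₁ x = α x) ∧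
      {y | (kempeGraph G α₁ a b).Adj v y}.Subsingleton := by
  rcases exists_forall_ne_or_subsingleton α a b hv with ⟨e, hea, heb, he⟩ | hN
  · refine ⟨Function.update α v e, kempeEquiv_update fun y hy => ⟨(hα hy).symm, he y hy⟩,
      fun x hx => Function.update_of_ne hx _ _, fun y hy => ?_⟩
    have hv : Function.update α v e v = a ∨ Function.update α v e v = b := hy.2.1
    simp [hea, heb] at hv
  · exact ⟨α, ReflTransGen.refl, fun _ _ => rfl, hN.anti fun y hy => ⟨hy.1, hy.2.2⟩⟩

lemma IsKempeClosed.exists_of_deleteIncidenceSet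
    (hC : IsKempeClosed (G.deleteIncidenceSet v) γ a b C) (hvC : v ∉ C)
    (hαγ : ∀ x ≠ v, α x = γ x) (hv : {y | (kempeGraph G α a b).Adj v y}.Subsingleton) :
    ∃ S, IsKempeClosed G α a b S ∧ ∀ x ≠ v, (x ∈ S ↔ x ∈ C) := by
  have hCv : ∀ x ∈ C, x ≠ v := fun x hx h => hvC (h ▸ hx)
  have hmem : ∀ x ∈ C, α x = a ∨ α x = b := fun x hx => hαγ x (hCv x hx) ▸ hC.1 x hx
  have hstep : ∀ x ∈ C, ∀ y ≠ v, (kempeGraph G α a b).Adj x y → y ∈ C := fun x hx y hy hxy =>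
    hC.2 hx ((kempeGraph_deleteIncidenceSet_adj_iff hαγ (hCv x hx) hy).mpr hxy)
  by_cases hp : ∃ p ∈ C, (kempeGraph G α a b).Adj p v
  · -- `p` is the only neighbour of `v` in the Kempe graph, so `v` joins the chain of `p`
    obtain ⟨p, hpC, hpv⟩ := hp
    refine ⟨insert v C, ⟨?_, ?_⟩, fun x hx => by simp [hx]⟩
    · rintro x (rfl | hx)
      exacts [hpv.2.2, hmem x hx]
    · rintro x y (rfl | hx) hxy
      · exact Or.inr (hv hxy hpv.symm ▸ hpC)
      · by_cases hy : y = v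
        exacts [Or.inl hy, Or.inr (hstep x hx y hy hxy)]
  · push Not at hp
    refine ⟨C, ⟨hmem, fun x y hx hxy => hstep x hx y ?_ hxy⟩, fun _ _ => Iff.rfl⟩
    rintro rfl
    exact hp x hx hxy

lemma KempeStep.exists_lift_deleteIncidenceSet [Finite V] (hv : (G.neighborSet v).ncard ≤ k - 1)
    (hα : IsProperColoring G k α) (hαγ : ∀ x ≠ v, α x = γ x)
    (h : KempeStep (G.deleteIncidenceSet v) k γ δ) :
    ∃ α', KempeEquiv G k α α' ∧ ∀ x ≠ v, α' x = δ x := by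
  obtain ⟨a, b, x, hx, rfl⟩ := kempeStep_iff.mp h
  have hiso : ∀ y, (kempeGraph (G.deleteIncidenceSet v) γ a b).Reachable v y → y = v := by
    intro y h
    rcases ((reachable_iff_reflTransGen v y).mp h).cases_head with rfl | ⟨z, hz, -⟩
    · rfl
    · exact ((deleteIncidenceSet_adj.mp hz.1).2.1 rfl).elim
  by_cases hxv : x = v
  · subst hxv
    refine ⟨α, ReflTransGen.refl, fun y hy => ?_⟩
    have hyC : y ∉ {y | (kempeGraph (G.deleteIncidenceSet x) γ a b).Reachable x y} :=
      fun h => hy (hiso y h)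
    rw [kempeSwap, if_neg hyC, hαγ y hy]
  obtain ⟨α₁, h₁, hα₁, hsub⟩ := exists_kempeEquiv_subsingleton_kempeGraph_adj hv hα a b
  have hα₁γ : ∀ y ≠ v, α₁ y = γ y := fun y hy => (hα₁ y hy).trans (hαγ y hy)
  obtain ⟨S, hS, hSC⟩ := (isKempeClosed_reachable hx).exists_of_deleteIncidenceSet
    (fun h => hxv (hiso x h.symm)) hα₁γ hsub
  refine ⟨kempeSwap α₁ a b S, h₁.trans (kempeEquiv_kempeSwap hS), fun y hy => ?_⟩
  simp only [kempeSwap, hSC y hy, hα₁γ y hy]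

lemma KempeEquiv.exists_lift_deleteIncidenceSet [Finite V] (hv : (G.neighborSet v).ncard ≤ k - 1)
    (hα : IsProperColoring G k α) (hαγ : ∀ x ≠ v, α x = γ x)
    (h : KempeEquiv (G.deleteIncidenceSet v) k γ δ) :
    ∃ α', KempeEquiv G k α α' ∧ ∀ x ≠ v, α' x = δ x := by
  unfold KempeEquiv at h
  induction h with
  | refl => exact ⟨α, ReflTransGen.refl, hαγ⟩
  | tail _ hstep ih =>
    obtain ⟨α₁, h₁, hα₁⟩ := ih
    obtain ⟨α₂, h₂, hα₂⟩ := hstep.exists_lift_deleteIncidenceSet hv (h₁.isProperColoring hα) hα₁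
    exact ⟨α₂, h₁.trans h₂, hα₂⟩

theorem kempeEquiv_of_degenerate [Finite V] (hG : Degenerate G (k - 1))
    (hc : IsProperColoring G k c) (hc' : IsProperColoring G k c') : KempeEquiv G k c c' := by
  induction hn : G.edgeSet.ncard using Nat.strong_induction_on generalizing G with
  | _ n ih =>
  by_cases hE : ∃ x y, G.Adj x y
  swap
  · push Not at hE
    exact kempeEquiv_of_isIndepSet hc hc' fun x _ y _ _ => hE x y
  obtain ⟨x, y, hxy⟩ := hE
  obtain ⟨v, ⟨w, hvw⟩, hv⟩ := hG {x | ∃ y, G.Adj x y} ⟨x, y, hxy⟩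
  have hsupp : G.neighborSet v ⊆ {x | ∃ y, G.Adj x y} := fun y hy => ⟨v, hy.symm⟩
  rw [Set.inter_eq_right.mpr hsupp] at hv
  have hlt : (G.deleteIncidenceSet v).edgeSet.ncard < n := by
    rw [← hn, edgeSet_deleteIncidenceSet]
    have hvw' : s(v, w) ∈ G.edgeSet ∩ G.incidenceSet v := ⟨hvw, hvw, Sym2.mem_mk_left v w⟩
    exact Set.ncard_lt_ncard (Set.sdiff_ssubset_left_iff.mpr ⟨_, hvw'⟩)
  have hle := G.deleteIncidenceSet_le v
  obtain ⟨β, hβ, hβc'⟩ := (ih _ hlt (hG.mono_left hle) (fun _ _ h => hc (hle h))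
    (fun _ _ h => hc' (hle h)) rfl).exists_lift_deleteIncidenceSet hv hc fun _ _ => rfl
  have hβv : {x | β x ≠ c' x} ⊆ {v} := fun x hx => by_contra fun hxv => hx (hβc' x hxv)
  exact hβ.trans (kempeEquiv_of_isIndepSet (hβ.isProperColoring hc) hc'
    ((Set.subsingleton_singleton.anti hβv).pairwise _))

end LasVergnasMeyniel

section Merge

variable {W : Type*} {k : ℕ} {G : SimpleGraph V} {H : SimpleGraph W} {f : V → W}
  {c c' : W → Fin k} {a b : Fin k}

lemma IsProperColoring.map (hc : IsProperColoring G k (c ∘ f)) :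
    IsProperColoring (G.map f) k c := by
  rintro _ _ ⟨-, x, y, hxy, rfl, rfl⟩
  exact hc hxy

lemma IsKempeClosed.preimage {C : Set W} (hf : G.map f ≤ H) (hC : IsKempeClosed H c a b C) :
    IsKempeClosed G (c ∘ f) a b (f ⁻¹' C) := by
  refine ⟨fun x hx => hC.1 _ hx, fun x y hx hxy => ?_⟩
  rcases eq_or_ne (f x) (f y) with hxy' | hxy'
  · exact show f y ∈ C from hxy' ▸ hx
  · exact hC.2 hx ⟨hf (map_adj_apply' hxy.1 hxy'), hxy.2⟩

lemma KempeStep.comp [Finite V] (hf : G.map f ≤ H) (h : KempeStep H k c c') :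
    KempeEquiv G k (c ∘ f) (c' ∘ f) := by
  obtain ⟨a, b, x, hx, rfl⟩ := kempeStep_iff.mp h
  exact kempeEquiv_kempeSwap ((isKempeClosed_reachable hx).preimage hf)

lemma KempeEquiv.comp [Finite V] (hf : G.map f ≤ H) (h : KempeEquiv H k c c') :
    KempeEquiv G k (c ∘ f) (c' ∘ f) := by
  unfold KempeEquiv at h
  induction h with
  | refl => exact ReflTransGen.refl
  | tail _ hstep ih => exact ih.trans (hstep.comp hf)

lemma not_map_adj_of_notMem_range {w y : W} (hw : w ∉ Set.range f) : ¬ (G.map f).Adj w y := by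
  rintro ⟨-, x, -, -, rfl, -⟩
  exact hw ⟨x, rfl⟩

lemma neighborSet_map_subset {p : V} (hp : ∀ x, f x = f p → x = p) :
    (G.map f).neighborSet (f p) ⊆ f '' G.neighborSet p := by
  rintro _ ⟨-, x, y, hxy, hx, rfl⟩
  obtain rfl := hp x hx
  exact ⟨y, hxy, rfl⟩

lemma ncard_le_ncard_neighborSet_sub_one [Finite V] {T : Set W} {p q : V} (hpq : G.Adj p q)
    (hT : T ⊆ f '' (G.neighborSet p \ {q})) : T.ncard ≤ (G.neighborSet p).ncard - 1 :=
  calc T.ncard ≤ (f '' (G.neighborSet p \ {q})).ncard := Set.ncard_le_ncard hT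
    _ ≤ (G.neighborSet p \ {q}).ncard := Set.ncard_image_le
    _ = (G.neighborSet p).ncard - 1 := Set.ncard_sdiff_singleton_of_mem hpq

lemma ThreeConnected.exists_adj_mem_notMem [Fintype V] (h3c : ThreeConnected G) {u v p x : V}
    {S : Set V} (hne : u ≠ v) (hpS : p ∈ S) (hpu : p ≠ u) (hpv : p ≠ v) (hxS : x ∉ S)
    (hxu : x ≠ u) (hxv : x ≠ v) :
    ∃ p q, G.Adj p q ∧ p ∈ S ∧ p ≠ u ∧ p ≠ v ∧ q ∉ S ∧ q ≠ v := by
  obtain ⟨walk⟩ := (h3c.2 {u, v} (Set.ncard_pair hne).le).preconnected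
    ⟨p, by simp [hpu, hpv]⟩ ⟨x, by simp [hxu, hxv]⟩
  obtain ⟨d, -, hd₁, hd₂⟩ := walk.exists_boundary_dart {z | z.1 ∈ S} hpS hxS
  have h₁ := d.fst.2
  have h₂ := d.snd.2
  simp only [Set.mem_compl_iff, Set.mem_insert_iff, Set.mem_singleton_iff, not_or] at h₁ h₂
  exact ⟨d.fst, d.snd, d.adj, hd₁, h₁.1, h₁.2, hd₂, h₂.2⟩

lemma notMem_range_update_id {u v : V} (hne : u ≠ v) : v ∉ Set.range (Function.update id v u) := by
  rintro ⟨x, hx⟩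
  by_cases hxv : x = v <;> simp [hxv, hne] at hx

lemma neighborSet_map_update_id_subset {u v p : V} (hpu : p ≠ u) (hpv : p ≠ v) :
    (G.map (Function.update id v u)).neighborSet p ⊆
      Function.update id v u '' G.neighborSet p := by
  have hp : Function.update id v u p = p := Function.update_of_ne hpv _ _
  have hfibre : ∀ x, Function.update id v u x = Function.update id v u p → x = p := by
    intro x hx
    rw [hp] at hx
    by_cases hxv : x = v
    · simp [hxv, Ne.symm hpu] at hx
    · simpa [hxv] using hx
  simpa only [hp] using neighborSet_map_subset (G := G) hfibre

theorem degenerate_map_update_id [Fintype V] {u v w : V} (h3c : ThreeConnected G)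
    (hdeg : ∀ x, (G.neighborSet x).ncard ≤ k) (hne : u ≠ v) (huw : G.Adj u w)
    (hvw : G.Adj v w) : Degenerate (G.map (Function.update id v u)) (k - 1) := by
  set π : V → V := Function.update id v u
  intro S hS
  by_cases hvS : v ∈ S
  · have hempty : S ∩ (G.map π).neighborSet v = ∅ := Set.eq_empty_of_forall_notMem
      fun y hy => not_map_adj_of_notMem_range (notMem_range_update_id hne) hy.2
    exact ⟨v, hvS, by simp [hempty]⟩
  by_cases hSu : S ⊆ {u}
  · obtain ⟨x, hx⟩ := hS
    obtain rfl : x = u := hSu hx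
    have hempty : S ∩ (G.map π).neighborSet x = ∅ :=
      Set.eq_empty_of_forall_notMem fun y hy => by
        obtain rfl := Set.mem_singleton_iff.mp (hSu hy.1)
        exact (G.map π).irrefl hy.2
    exact ⟨x, hx, by simp [hempty]⟩
  obtain ⟨p, hpS, hpu⟩ := Set.not_subset.mp hSu
  rw [Set.mem_singleton_iff] at hpu
  have hpv : p ≠ v := fun h => hvS (h ▸ hpS)
  by_cases hfull : ∀ x, x ≠ u → x ≠ v → x ∈ S
  · -- the neighbours `u` and `v` of `w` are merged
    have hwu : w ≠ u := huw.ne.symm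
    have hwv : w ≠ v := hvw.ne.symm
    refine ⟨w, hfull w hwu hwv, (ncard_le_ncard_neighborSet_sub_one (f := π)
      (T := S ∩ (G.map π).neighborSet w) hvw.symm ?_).trans (Nat.sub_le_sub_right (hdeg w) 1)⟩
    rintro _ ⟨-, hmap⟩
    obtain ⟨y, hy, rfl⟩ := neighborSet_map_update_id_subset hwu hwv hmap
    by_cases hyv : y = v
    · exact ⟨u, ⟨huw.symm, hne⟩, by simp [π, hyv, hne]⟩
    · exact ⟨y, ⟨hy, hyv⟩, rfl⟩
  push Not at hfull
  obtain ⟨x, hxu, hxv, hxS⟩ := hfull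
  obtain ⟨p, q, hpq, hpS, hpu, hpv, hqS, hqv⟩ :=
    h3c.exists_adj_mem_notMem hne hpS hpu hpv hxS hxu hxv
  refine ⟨p, hpS, (ncard_le_ncard_neighborSet_sub_one (f := π)
    (T := S ∩ (G.map π).neighborSet p) hpq ?_).trans (Nat.sub_le_sub_right (hdeg p) 1)⟩
  rintro _ ⟨hyS, hmap⟩
  obtain ⟨y, hy, rfl⟩ := neighborSet_map_update_id_subset hpu hpv hmap
  refine ⟨y, ⟨hy, ?_⟩, rfl⟩
  rintro rfl
  exact hqS (by simpa [π, hqv] using hyS)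

end Merge

theorem stmt6_general {V : Type*} [Fintype V] (k : ℕ)
    (G : SimpleGraph V) [DecidableRel G.Adj] (h3c : ThreeConnected G)
    (hdeg : ∀ w : V, G.degree w ≤ k)
    (u v : V) (hne : u ≠ v)
    (hcommon : ∃ w : V, G.Adj u w ∧ G.Adj v w) :
    ∀ c c' : V → Fin k, IsProperColoring G k c → IsProperColoring G k c' →
      c u = c v → c' u = c' v → KempeEquiv G k c c' := by
  intro c c' hc hc' hcuv hc'uv
  obtain ⟨w, huw, hvw⟩ := hcommon
  have hdeg' : ∀ x, (G.neighborSet x).ncard ≤ k := fun x => by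
    rw [← coe_neighborFinset, Set.ncard_coe_finset, card_neighborFinset_eq_degree]
    exact hdeg x
  have hmerge : ∀ d : V → Fin k, d u = d v → d ∘ Function.update id v u = d := fun d hd => by
    rw [Function.comp_update, Function.comp_id, hd, Function.update_eq_self]
  have hH := degenerate_map_update_id h3c hdeg' hne huw hvw
  have hproper : ∀ d, IsProperColoring G k d → d u = d v →
      IsProperColoring (G.map (Function.update id v u)) k d := fun d hd hduv =>
    IsProperColoring.map ((hmerge d hduv).symm ▸ hd)
  have h := (kempeEquiv_of_degenerate hH (hproper c hc hcuv) (hproper c' hc' hc'uv)).comp le_rfl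
  rwa [hmerge c hcuv, hmerge c' hc'uv] at h

/-- for `k ≥ 3` and a 3-connected graph `G` of maximum degree at most
`k`, with `u, v` non-adjacent vertices having a common neighbour, any two proper
`k`-colourings giving `u` and `v` the same colour are Kempe equivalent. -/
theorem stmt6 {V : Type*} [Fintype V] [DecidableEq V] (k : ℕ) (hk : 3 ≤ k)
    (G : SimpleGraph V) [DecidableRel G.Adj] (h3c : ThreeConnected G)
    (hdeg : ∀ w : V, G.degree w ≤ k)
    (u v : V) (hne : u ≠ v) (huv : ¬ G.Adj u v)
    (hcommon : ∃ w : V, G.Adj u w ∧ G.Adj v w) :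
    ∀ c c' : V → Fin k, IsProperColoring G k c → IsProperColoring G k c' →
      c u = c v → c' u = c' v → KempeEquiv G k c c' :=
  stmt6_general k G h3c hdeg u v hne hcommon
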